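/- Assume (H1) and (H2) and let p, q ∈ [0,1]. If (S(t))_{t≥0} is the C₀-semigroup generated by A, then the semigroup is positive, i.e. S(t)X⁺ ⊆ X⁺ for every t ≥ 0. -/

import Mathlib

open MeasureTheory Set Filter Topology

noncomputable section

/-- `ℝ³` with the `ℓ¹` norm. -/
abbrev V3 : Type := PiLp 1 fun _ : Fin 3 => ℝ

/-- Lebesgue measure restricted to `[0,ω]`. -/
def muM (ω : ℝ) : Measure ℝ := volume.restrict (Icc (0:ℝ) ω)

/-- The state space `X = L¹([0,ω],ℝ³)` with norm `‖ψ‖₁ = ‖ψ₁‖₁+‖ψ₂‖₁+‖ψ₃‖₁`. -/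
abbrev XX (ω : ℝ) := Lp (α := ℝ) V3 1 (muM ω)

/-- The cone `X⁺` of a.e. componentwise nonnegative elements of `X`. -/
def Xpos (ω : ℝ) : Set (XX ω) :=
  {ψ | ∀ᵐ a ∂(muM ω), ∀ i : Fin 3, 0 ≤ ψ a i}

/-- `M` is the essential supremum of `|f|` on `[0,ω]`. -/
def IsEssSupOn (ω : ℝ) (f : ℝ → ℝ) (M : ℝ) : Prop :=
  (∀ᵐ a ∂(muM ω), |f a| ≤ M) ∧ ∀ C : ℝ, (∀ᵐ a ∂(muM ω), |f a| ≤ C) → M ≤ C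

/-- `m` is the essential infimum of `f` on `[0,ω]`. -/
def IsEssInfOn (ω : ℝ) (f : ℝ → ℝ) (m : ℝ) : Prop :=
  (∀ᵐ a ∂(muM ω), m ≤ f a) ∧ ∀ C : ℝ, (∀ᵐ a ∂(muM ω), C ≤ f a) → C ≤ m

/-- `M` is the essential supremum of `|k|` on `[0,ω]²`. -/
def IsEssSupSq (ω : ℝ) (k : ℝ → ℝ → ℝ) (M : ℝ) : Prop :=
  (∀ᵐ z ∂((muM ω).prod (muM ω)), |k z.1 z.2| ≤ M) ∧
    ∀ C : ℝ, (∀ᵐ z ∂((muM ω).prod (muM ω)), |k z.1 z.2| ≤ C) → M ≤ C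

/-- The nonlocal boundary operator `𝓑ψ = ∫₀^ω B(a)ψ(a)da`, where `B(a)` has rows
`(β,(1−p)β,(1−q)β)`, `(0,pβ,0)`, `(0,0,qβ)`. -/
def Bvec (ω p q : ℝ) (β : ℝ → ℝ) (g : ℝ → Fin 3 → ℝ) : Fin 3 → ℝ :=
  ![∫ a in Icc (0:ℝ) ω, β a * (g a 0 + (1 - p) * g a 1 + (1 - q) * g a 2),
    ∫ a in Icc (0:ℝ) ω, p * (β a * g a 1),
    ∫ a in Icc (0:ℝ) ω, q * (β a * g a 2)]

/-- `ψ ∈ D(A)`, witnessed by an a.e. representative `g` which is absolutely continuous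
on `[0,ω]` (a primitive of an integrable `g'`) componentwise, with `μg` integrable and
satisfying the nonlocal boundary condition `g(0) = 𝓑g`. -/
def InDomA (ω p q : ℝ) (β μf : ℝ → ℝ) (ψ : XX ω) (g g' : ℝ → Fin 3 → ℝ) : Prop :=
  (∀ᵐ a ∂(muM ω), ∀ i : Fin 3, ψ a i = g a i) ∧
  IntegrableOn g' (Icc 0 ω) ∧
  (∀ i : Fin 3, ∀ a ∈ Icc (0:ℝ) ω, g a i = g 0 i + ∫ s in (0:ℝ)..a, g' s i) ∧
  IntegrableOn (fun a => fun i => μf a * g a i) (Icc 0 ω) ∧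
  g 0 = Bvec ω p q β g

/-- Pointwise values of `Aψ = −ψ′ − μψ + 𝒢ψ`, where `𝒢(a)` has rows `(0,δ,0)`,
`(0,−(δ+γ),0)`, `(0,γ,0)`. -/
def Aval (γ δ μf : ℝ → ℝ) (g g' : ℝ → Fin 3 → ℝ) (a : ℝ) : Fin 3 → ℝ :=
  ![-g' a 0 - μf a * g a 0 + δ a * g a 1,
    -g' a 1 - μf a * g a 1 - (δ a + γ a) * g a 1,
    -g' a 2 - μf a * g a 2 + γ a * g a 1]

/-- `(S(t))_{t≥0}` is the `C₀`-semigroup generated by `A`: semigroup laws, strong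
continuity, and for every `x ∈ X` the limit `lim_{h→0⁺}(S(h)x−x)/h` exists iff
`x ∈ D(A)`, in which case the limit is (a.e.) given by `Ax = −x′ − μx + 𝒢x`. -/
def IsGenSemigroup (ω p q : ℝ) (β γ δ μf : ℝ → ℝ) (S : ℝ → XX ω →L[ℝ] XX ω) : Prop :=
  S 0 = 1 ∧
  (∀ s t : ℝ, 0 ≤ s → 0 ≤ t → S (t + s) = (S t).comp (S s)) ∧
  (∀ x : XX ω, ContinuousOn (fun t => S t x) (Ici 0)) ∧
  (∀ x : XX ω,
    (∃ y : XX ω, Tendsto (fun h : ℝ => h⁻¹ • (S h x - x)) (nhdsWithin 0 (Ioi 0)) (nhds y))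
      ↔ ∃ g g' : ℝ → Fin 3 → ℝ, InDomA ω p q β μf x g g') ∧
  (∀ x y : XX ω, ∀ g g' : ℝ → Fin 3 → ℝ, InDomA ω p q β μf x g g' →
    Tendsto (fun h : ℝ => h⁻¹ • (S h x - x)) (nhdsWithin 0 (Ioi 0)) (nhds y) →
    ∀ᵐ a ∂(muM ω), ∀ i : Fin 3, y a i = Aval γ δ μf g g' a i)

/-- A mild solution on `[0,T]` of `x′(t) = Ax(t) + F(t,x(t))`, `x(0) = x̂`. -/
def IsMildSol (ω T : ℝ) (S : ℝ → XX ω →L[ℝ] XX ω) (F : ℝ → XX ω → XX ω)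
    (xhat : XX ω) (x : ℝ → XX ω) : Prop :=
  ContinuousOn x (Icc 0 T) ∧ x 0 = xhat ∧
  ∀ t ∈ Icc (0:ℝ) T, x t = S t xhat + ∫ s in Icc (0:ℝ) t, S (t - s) (F s (x s))

/-- A classical solution on `[0,T]` of `x′(t) = Ax(t) + F(t,x(t))`: continuously
differentiable, with values in `D(A)` and satisfying the equation for `t ∈ (0,T)`. -/
def IsClassicalSol (ω T p q : ℝ) (β γ δ μf : ℝ → ℝ) (F : ℝ → XX ω → XX ω)
    (x : ℝ → XX ω) : Prop :=
  ∃ x' : ℝ → XX ω,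
    ContinuousOn x' (Icc 0 T) ∧
    (∀ t ∈ Icc (0:ℝ) T, HasDerivWithinAt x (x' t) (Icc 0 T) t) ∧
    ∀ t ∈ Ioo (0:ℝ) T, ∃ g g' : ℝ → Fin 3 → ℝ, InDomA ω p q β μf (x t) g g' ∧
      ∀ᵐ a ∂(muM ω), ∀ i : Fin 3,
        (x' t) a i = Aval γ δ μf g g' a i + (F t (x t)) a i

/-- The force of infection `Λ(a,ζ) = ∫₀^ω k(a,σ)ζ(σ)dσ`. -/
def Lam (ω : ℝ) (k : ℝ → ℝ → ℝ) (ζ : ℝ → ℝ) (a : ℝ) : ℝ :=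
  ∫ σ in Icc (0:ℝ) ω, k a σ * ζ σ

/-- Pointwise values of the nonlinearity `f(ψ)(a) = (−Λ(a,ψ₂)ψ₁(a), Λ(a,ψ₂)ψ₁(a), 0)`. -/
def fval (ω : ℝ) (k : ℝ → ℝ → ℝ) (g : ℝ → V3) (a : ℝ) : Fin 3 → ℝ :=
  ![-(Lam ω k (fun σ => g σ 1) a) * g a 0,
     (Lam ω k (fun σ => g σ 1) a) * g a 0, 0]

/-!
Let `Φ(ζ) = ∫ ∑ᵢ (ζᵢ)⁻` be the mass of the negative part, so that `X⁺ = {Φ = 0}`. For `u ∈ D(A)`,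
testing `Au` against `-𝟙{u < 0}` gives at most `C Φ(u)`: the transport term integrates to boundary
values, of which only `u(0)⁻` counts, and the nonlocal boundary condition bounds `u(0)⁻` by
`3 ‖β‖∞ Φ(u)`; mortality has the right sign and the off-diagonal entries of `𝒢` are nonnegative.
Along an orbit of `ψ₀ ∈ D(A)` this is a Grönwall inequality, so `Φ(S(t)ψ₀) ≤ e^{Ct} Φ(ψ₀)`. As `Φ`
is not differentiable, the argument is run for the `C¹` functional built from a Huber-type
smoothing of `x ↦ x⁻`, which is within `ε` of it, and then `ε → 0`. Density of `D(A)` and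
continuity extend the bound to all of `X`.
-/

section NegPart

lemma negPart_add_le (x y : ℝ) : (x + y)⁻ ≤ x⁻ + y⁻ := by
  simp only [negPart_def]
  exact max_le (by linarith [le_max_left (-x) 0, le_max_left (-y) 0])
    (add_nonneg (le_max_right _ _) (le_max_right _ _))

lemma negPart_mul_of_nonneg {c : ℝ} (hc : 0 ≤ c) (x : ℝ) : (c * x)⁻ = c * x⁻ := by
  simp only [negPart_def, ← mul_neg, mul_max_of_nonneg _ _ hc, mul_zero]

lemma negPart_mul_le_of_mem_Icc {c x : ℝ} (hc : c ∈ Icc (0 : ℝ) 1) : (c * x)⁻ ≤ x⁻ := by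
  rw [negPart_mul_of_nonneg hc.1]
  exact mul_le_of_le_one_left (negPart_nonneg x) hc.2

lemma negPart_mul_le_mul {b M w s : ℝ} (hb : b ∈ Icc 0 M) (hw : w⁻ ≤ s) : (b * w)⁻ ≤ M * s := by
  rw [negPart_mul_of_nonneg hb.1]
  exact mul_le_mul hb.2 hw (negPart_nonneg w) (hb.1.trans hb.2)

lemma mul_le_negPart {n : ℝ} (hn : n ∈ Icc (-1 : ℝ) 0) (y : ℝ) : n * y ≤ y⁻ := by
  rcases le_total 0 y with hy | hy
  · exact (mul_nonpos_of_nonpos_of_nonneg hn.2 hy).trans (negPart_nonneg y)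
  · rw [negPart_eq_neg.2 hy]; nlinarith [hn.1]

lemma negPart_integral_le {α : Type*} [MeasurableSpace α] {μ : Measure α} (f : α → ℝ) :
    (∫ a, f a ∂μ)⁻ ≤ ∫ a, (f a)⁻ ∂μ := by
  by_cases hf : Integrable f μ
  · rw [negPart_def]
    refine max_le ?_ (integral_nonneg fun _ => negPart_nonneg _)
    rw [← integral_neg]
    exact integral_mono hf.neg (by simpa only [negPart_def] using hf.neg_part)
      fun a => neg_le_negPart _
  · simpa [integral_undef hf] using integral_nonneg fun a => negPart_nonneg (f a)

end NegPart

section SmoothNegPart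

def smoothNegPartDeriv (ε x : ℝ) : ℝ := max (-1) (min 0 (x / ε))

/-- For `ε > 0` this is `0` on `[0, ∞)`, `x² / (2ε)` on `[-ε, 0]` and `-x - ε / 2` on `(-∞, -ε]`. -/
def smoothNegPart (ε x : ℝ) : ℝ := ∫ s in (0 : ℝ)..x, smoothNegPartDeriv ε s

variable {ε : ℝ}

lemma continuous_smoothNegPartDeriv (ε : ℝ) : Continuous (smoothNegPartDeriv ε) := by
  unfold smoothNegPartDeriv; fun_prop

lemma smoothNegPartDeriv_mem_Icc (ε x : ℝ) : smoothNegPartDeriv ε x ∈ Icc (-1) 0 :=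
  ⟨le_max_left _ _, max_le (by norm_num) (min_le_left _ _)⟩

lemma norm_smoothNegPartDeriv_le (ε x : ℝ) : ‖smoothNegPartDeriv ε x‖ ≤ 1 := by
  rw [Real.norm_eq_abs, abs_le]
  exact ⟨(smoothNegPartDeriv_mem_Icc ε x).1, (smoothNegPartDeriv_mem_Icc ε x).2.trans zero_le_one⟩

lemma smoothNegPartDeriv_of_nonneg (hε : 0 ≤ ε) {x : ℝ} (hx : 0 ≤ x) :
    smoothNegPartDeriv ε x = 0 := by
  simp [smoothNegPartDeriv, min_eq_left (div_nonneg hx hε)]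

lemma smoothNegPartDeriv_of_le_neg (hε : 0 < ε) {x : ℝ} (hx : x ≤ -ε) :
    smoothNegPartDeriv ε x = -1 := by
  have : x / ε ≤ -1 := by rwa [div_le_iff₀ hε, neg_one_mul]
  simp [smoothNegPartDeriv, min_eq_right (this.trans (by norm_num : (-1 : ℝ) ≤ 0)), this]

lemma smoothNegPartDeriv_mul_self_nonneg (hε : 0 ≤ ε) (x : ℝ) :
    0 ≤ smoothNegPartDeriv ε x * x := by
  rcases le_total 0 x with hx | hx
  · simp [smoothNegPartDeriv_of_nonneg hε hx]
  · exact mul_nonneg_of_nonpos_of_nonpos (smoothNegPartDeriv_mem_Icc ε x).2 hx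

lemma hasDerivAt_smoothNegPart (ε x : ℝ) :
    HasDerivAt (smoothNegPart ε) (smoothNegPartDeriv ε x) x :=
  ((continuous_smoothNegPartDeriv ε).integral_hasStrictDerivAt 0 x).hasDerivAt

lemma lipschitzWith_smoothNegPart (ε : ℝ) : LipschitzWith 1 (smoothNegPart ε) := by
  refine lipschitzWith_of_nnnorm_deriv_le
    (fun x => (hasDerivAt_smoothNegPart ε x).differentiableAt) fun x => ?_
  rw [(hasDerivAt_smoothNegPart ε x).deriv, ← NNReal.coe_le_coe, coe_nnnorm]
  exact norm_smoothNegPartDeriv_le ε x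

lemma smoothNegPart_zero (ε : ℝ) : smoothNegPart ε 0 = 0 :=
  intervalIntegral.integral_same

lemma smoothNegPart_sub (ε x y : ℝ) :
    smoothNegPart ε y - smoothNegPart ε x = ∫ s in x..y, smoothNegPartDeriv ε s :=
  intervalIntegral.integral_interval_sub_left
    ((continuous_smoothNegPartDeriv ε).intervalIntegrable _ _)
    ((continuous_smoothNegPartDeriv ε).intervalIntegrable _ _)

lemma smoothNegPart_of_nonneg (hε : 0 ≤ ε) {x : ℝ} (hx : 0 ≤ x) : smoothNegPart ε x = 0 := by
  refine (intervalIntegral.integral_congr fun s hs => ?_).trans intervalIntegral.integral_zero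
  rw [uIcc_of_le hx] at hs
  exact smoothNegPartDeriv_of_nonneg hε hs.1

lemma smoothNegPart_nonneg (hε : 0 ≤ ε) (x : ℝ) : 0 ≤ smoothNegPart ε x := by
  rcases le_total 0 x with hx | hx
  · rw [smoothNegPart_of_nonneg hε hx]
  · have h := smoothNegPart_sub ε x 0
    rw [smoothNegPart_zero] at h
    have : 0 ≤ ∫ s in x..0, -smoothNegPartDeriv ε s :=
      intervalIntegral.integral_nonneg hx fun s _ =>
        neg_nonneg.2 (smoothNegPartDeriv_mem_Icc ε s).2
    rw [intervalIntegral.integral_neg] at this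
    linarith

lemma smoothNegPart_le_negPart (hε : 0 ≤ ε) (x : ℝ) : smoothNegPart ε x ≤ x⁻ := by
  rcases le_total 0 x with hx | hx
  · rw [smoothNegPart_of_nonneg hε hx]; exact negPart_nonneg x
  · have h := (lipschitzWith_smoothNegPart ε).dist_le_mul x 0
    rw [NNReal.coe_one, one_mul, smoothNegPart_zero, Real.dist_eq, Real.dist_eq, sub_zero,
      sub_zero] at h
    rw [negPart_eq_neg.2 hx]
    exact (le_abs_self _).trans (h.trans (abs_of_nonpos hx).le)

lemma negPart_le_smoothNegPart_add (hε : 0 < ε) (x : ℝ) : x⁻ ≤ smoothNegPart ε x + ε := by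
  rcases le_total (-ε) x with hx | hx
  · have : x⁻ ≤ ε := by rw [negPart_def]; exact max_le (by linarith) hε.le
    linarith [smoothNegPart_nonneg hε.le x]
  · have h := smoothNegPart_sub ε x (-ε)
    rw [intervalIntegral.integral_congr (g := fun _ => (-1 : ℝ)) fun s hs => by
      rw [uIcc_of_le hx] at hs; exact smoothNegPartDeriv_of_le_neg hε hs.2] at h
    simp only [intervalIntegral.integral_const, smul_eq_mul, mul_neg, mul_one] at h
    rw [negPart_eq_neg.2 (by linarith)]
    linarith [smoothNegPart_nonneg hε.le (-ε)]

end SmoothNegPart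

section AbsolutelyContinuous

lemma LipschitzWith.comp_absolutelyContinuousOnInterval {X Y : Type*} [PseudoMetricSpace X]
    [PseudoMetricSpace Y] {F : X → Y} {K : NNReal} {f : ℝ → X} {a b : ℝ} (hF : LipschitzWith K F)
    (hf : AbsolutelyContinuousOnInterval f a b) : AbsolutelyContinuousOnInterval (F ∘ f) a b := by
  unfold AbsolutelyContinuousOnInterval at hf ⊢
  have hK := hf.const_mul (K : ℝ)
  rw [mul_zero] at hK
  refine squeeze_zero (fun _ => Finset.sum_nonneg fun _ _ => dist_nonneg) (fun E => ?_) hK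
  rw [Finset.mul_sum]
  exact Finset.sum_le_sum fun i _ => hF.dist_le_mul _ _

lemma integral_deriv_comp_primitive {F F' f : ℝ → ℝ} {K : NNReal} (hF : LipschitzWith K F)
    (hF' : ∀ x, HasDerivAt F (F' x) x) {a b : ℝ} (hf : IntervalIntegrable f volume a b) (c : ℝ) :
    ∫ x in a..b, F' (c + ∫ s in a..x, f s) * f x = F (c + ∫ s in a..b, f s) - F c := by
  have hprim := hf.absolutelyContinuousOnInterval_intervalIntegral left_mem_uIcc
  have hac : AbsolutelyContinuousOnInterval (fun x => F (c + ∫ s in a..x, f s)) a b :=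
    (LipschitzWith.of_dist_le_mul fun x y => by simpa using hF.dist_le_mul (c + x) (c + y) :
      LipschitzWith K fun x => F (c + x)).comp_absolutelyContinuousOnInterval hprim
  have hFTC := hac.integral_deriv_eq_sub
  rw [intervalIntegral.integral_same, add_zero] at hFTC
  rw [← hFTC]
  refine intervalIntegral.integral_congr_ae ?_
  filter_upwards [hf.ae_hasDerivAt_integral] with x hx hxab
  exact (((hF' _).comp x ((hx (uIoc_subset_uIcc hxab) a left_mem_uIcc).const_add c)).deriv).symm

end AbsolutelyContinuous

section IntegralSumComp

variable {α ι : Type*} [MeasurableSpace α] {μ : Measure α} [Fintype ι]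

lemma PiLp.norm_eq_sum_abs (v : PiLp 1 fun _ : ι => ℝ) : ‖v‖ = ∑ i, |v i| := by
  simp [PiLp.norm_eq_sum (p := 1) (by norm_num), Real.norm_eq_abs]

lemma MeasureTheory.Lp.aestronglyMeasurable_apply (ζ : Lp (PiLp 1 fun _ : ι => ℝ) 1 μ) (i : ι) :
    AEStronglyMeasurable (fun a => ζ a i) μ :=
  (PiLp.continuous_apply 1 _ i).comp_aestronglyMeasurable (Lp.aestronglyMeasurable ζ)

lemma MeasureTheory.Lp.integrable_apply (ζ : Lp (PiLp 1 fun _ : ι => ℝ) 1 μ) (i : ι) :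
    Integrable (fun a => ζ a i) μ := by
  refine (L1.integrable_coeFn ζ).norm.mono' (Lp.aestronglyMeasurable_apply ζ i) ?_
  filter_upwards with a
  rw [Real.norm_eq_abs, PiLp.norm_eq_sum_abs]
  exact Finset.single_le_sum (f := fun j => |ζ a j|) (fun j _ => abs_nonneg _) (Finset.mem_univ i)

lemma MeasureTheory.Lp.norm_eq_integral_sum_abs (ζ : Lp (PiLp 1 fun _ : ι => ℝ) 1 μ) :
    ‖ζ‖ = ∫ a, ∑ i, |ζ a i| ∂μ := by
  simp only [L1.norm_eq_integral_norm, PiLp.norm_eq_sum_abs]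

def integralSumComp (F : ℝ → ℝ) (ζ : Lp (PiLp 1 fun _ : ι => ℝ) 1 μ) : ℝ :=
  ∫ a, ∑ i, F (ζ a i) ∂μ

variable {F : ℝ → ℝ} {K : NNReal}

lemma integrable_sum_comp (hF : LipschitzWith K F) (hF0 : F 0 = 0)
    (ζ : Lp (PiLp 1 fun _ : ι => ℝ) 1 μ) :
    Integrable (fun a => ∑ i, F (ζ a i)) μ := by
  refine integrable_finsetSum _ fun i _ => ((Lp.integrable_apply ζ i).norm.const_mul K).mono'
    (hF.continuous.comp_aestronglyMeasurable (Lp.aestronglyMeasurable_apply ζ i)) ?_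
  filter_upwards with a
  simpa [hF0] using hF.norm_sub_le (ζ a i) 0

lemma lipschitzWith_integralSumComp (hF : LipschitzWith K F) (hF0 : F 0 = 0) :
    LipschitzWith K (integralSumComp (μ := μ) (ι := ι) F) := by
  refine LipschitzWith.of_dist_le_mul fun ζ ξ => ?_
  rw [Real.dist_eq, dist_eq_norm, Lp.norm_eq_integral_sum_abs, integralSumComp, integralSumComp,
    ← integral_sub (integrable_sum_comp hF hF0 ζ) (integrable_sum_comp hF hF0 ξ),
    ← integral_const_mul]
  refine abs_integral_le_integral_abs.trans (integral_mono_ae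
    ((integrable_sum_comp hF hF0 ζ).sub (integrable_sum_comp hF hF0 ξ)).abs
    ((integrable_finsetSum _ fun i _ => (Lp.integrable_apply (ζ - ξ) i).abs).const_mul _) ?_)
  filter_upwards [Lp.coeFn_sub ζ ξ] with a ha
  rw [← Finset.sum_sub_distrib, Finset.mul_sum]
  refine (Finset.abs_sum_le_sum_abs _ _).trans (Finset.sum_le_sum fun i _ => ?_)
  rw [ha]
  exact hF.dist_le_mul (ζ a i) (ξ a i)

lemma integralSumComp_le_add [IsFiniteMeasure μ] {G : ℝ → ℝ} {L : NNReal} {c : ℝ}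
    (hF : LipschitzWith K F) (hF0 : F 0 = 0) (hG : LipschitzWith L G) (hG0 : G 0 = 0)
    (hFG : ∀ x, F x ≤ G x + c) (ζ : Lp (PiLp 1 fun _ : ι => ℝ) 1 μ) :
    integralSumComp F ζ ≤ integralSumComp G ζ + Fintype.card ι * μ.real univ * c := by
  have hle : integralSumComp F ζ ≤ ∫ a, (∑ i, G (ζ a i) + Fintype.card ι * c) ∂μ :=
    integral_mono (integrable_sum_comp hF hF0 ζ)
      ((integrable_sum_comp hG hG0 ζ).add (integrable_const _)) fun a => by
      simpa [Finset.sum_add_distrib] using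
        Finset.sum_le_sum fun i (_ : i ∈ Finset.univ) => hFG (ζ a i)
  rwa [integral_add (integrable_sum_comp hG hG0 ζ) (integrable_const _), integral_const,
    smul_eq_mul, mul_comm (μ.real univ), mul_right_comm] at hle

lemma integralSumComp_nonneg (hF : ∀ x, 0 ≤ F x) (ζ : Lp (PiLp 1 fun _ : ι => ℝ) 1 μ) :
    0 ≤ integralSumComp F ζ :=
  integral_nonneg fun _ => Finset.sum_nonneg fun _ _ => hF _

lemma integralSumComp_negPart_eq_zero_iff (ζ : Lp (PiLp 1 fun _ : ι => ℝ) 1 μ) :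
    integralSumComp (·⁻) ζ = 0 ↔ ∀ᵐ a ∂μ, ∀ i, 0 ≤ ζ a i := by
  rw [integralSumComp, integral_eq_zero_iff_of_nonneg_ae
    (Eventually.of_forall fun _ => Finset.sum_nonneg fun _ _ => negPart_nonneg _)
    (integrable_sum_comp lipschitzWith_negPart (by simp) ζ)]
  refine eventually_congr (Eventually.of_forall fun a => ?_)
  simp [Finset.sum_eq_zero_iff_of_nonneg fun i _ => negPart_nonneg (ζ a i)]

lemma HasDerivAt.tendsto_slope_zero_right_mul {F' x : ℝ} (hF : HasDerivAt F F' x) (y : ℝ) :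
    Tendsto (fun h : ℝ => h⁻¹ * (F (x + h * y) - F x)) (𝓝[>] 0) (𝓝 (F' * y)) := by
  have := hF.comp_of_eq 0 (((hasDerivAt_id 0).mul_const y).const_add x) (by simp)
  simpa [Function.comp_def] using this.tendsto_slope_zero_right

lemma tendsto_slope_integralSumComp {F' : ℝ → ℝ} (hF : LipschitzWith K F) (hF0 : F 0 = 0)
    (hF' : ∀ x, HasDerivAt F (F' x) x) (u y : Lp (PiLp 1 fun _ : ι => ℝ) 1 μ) :
    Tendsto (fun h : ℝ => h⁻¹ * (integralSumComp F (u + h • y) - integralSumComp F u)) (𝓝[>] 0)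
      (𝓝 (∫ a, ∑ i, F' (u a i) * y a i ∂μ)) := by
  have hquot : ∀ h : ℝ, h⁻¹ * (integralSumComp F (u + h • y) - integralSumComp F u) =
      ∫ a, ∑ i, h⁻¹ * (F (u a i + h * y a i) - F (u a i)) ∂μ := by
    intro h
    rw [integralSumComp, integralSumComp, ← integral_sub (integrable_sum_comp hF hF0 _)
      (integrable_sum_comp hF hF0 u), ← integral_const_mul]
    refine integral_congr_ae ?_
    filter_upwards [Lp.coeFn_add u (h • y), Lp.coeFn_smul h y] with a hadd hsmul
    rw [hadd, Pi.add_apply, hsmul, Pi.smul_apply, ← Finset.sum_sub_distrib, Finset.mul_sum]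
    rfl
  simp only [hquot]
  refine tendsto_integral_filter_of_dominated_convergence (fun a => K * ∑ i, |y a i|)
    (Eventually.of_forall fun h => ?_) (Eventually.of_forall fun h => ?_)
    ((integrable_finsetSum _ fun i _ => (Lp.integrable_apply y i).abs).const_mul _)
    (Eventually.of_forall fun a => tendsto_finsetSum _ fun i _ =>
      (hF' _).tendsto_slope_zero_right_mul _)
  · exact Finset.aestronglyMeasurable_fun_sum _ fun i _ => aestronglyMeasurable_const.mul
      ((hF.continuous.comp_aestronglyMeasurable ((Lp.aestronglyMeasurable_apply u i).add
      ((Lp.aestronglyMeasurable_apply y i).const_mul h))).sub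
      (hF.continuous.comp_aestronglyMeasurable (Lp.aestronglyMeasurable_apply u i)))
  · filter_upwards with a
    rw [Real.norm_eq_abs, Finset.mul_sum]
    refine (Finset.abs_sum_le_sum_abs _ _).trans (Finset.sum_le_sum fun i _ => ?_)
    rcases eq_or_ne h 0 with rfl | hh
    · simp; positivity
    have := hF.dist_le_mul (u a i + h * y a i) (u a i)
    rw [Real.dist_eq, Real.dist_eq, add_sub_cancel_left, abs_mul] at this
    rw [abs_mul, abs_inv]
    calc |h|⁻¹ * |F (u a i + h * y a i) - F (u a i)| ≤ |h|⁻¹ * (K * (|h| * |y a i|)) := by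
          gcongr
      _ = K * |y a i| := by field_simp

end IntegralSumComp

section C0Semigroup

lemma hasDerivWithinAt_Ici_iff_tendsto_slope_zero_right {E : Type*} [NormedAddCommGroup E]
    [NormedSpace ℝ E] {f : ℝ → E} {f' : E} {t : ℝ} :
    HasDerivWithinAt f f' (Ici t) t ↔
      Tendsto (fun h : ℝ => h⁻¹ • (f (t + h) - f t)) (𝓝[>] 0) (𝓝 f') := by
  rw [← hasDerivWithinAt_Ioi_iff_Ici, hasDerivWithinAt_iff_tendsto_slope, sdiff_singleton_eq_self
    self_notMem_Ioi, ← add_zero t, ← Filter.map_add_left_nhdsGT, tendsto_map'_iff, add_zero]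
  simp [Function.comp_def, slope_def_module]

variable {E : Type*} [NormedAddCommGroup E] [NormedSpace ℝ E]

structure IsC0Semigroup (S : ℝ → E →L[ℝ] E) : Prop where
  map_zero : S 0 = 1
  map_add : ∀ s t : ℝ, 0 ≤ s → 0 ≤ t → S (t + s) = (S t).comp (S s)
  continuousOn_orbit : ∀ x : E, ContinuousOn (fun t => S t x) (Ici 0)

def HasGeneratorLimit (S : ℝ → E →L[ℝ] E) (x y : E) : Prop :=
  Tendsto (fun h : ℝ => h⁻¹ • (S h x - x)) (𝓝[>] 0) (𝓝 y)

variable {S : ℝ → E →L[ℝ] E} {x y : E}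

lemma HasGeneratorLimit.const_smul (h : HasGeneratorLimit S x y) (c : ℝ) :
    HasGeneratorLimit S (c • x) (c • y) := by
  refine (Tendsto.const_smul h c).congr fun h => ?_
  rw [map_smul, ← smul_sub, smul_comm]

lemma HasGeneratorLimit.tendsto_slope_comp {Φ : E → ℝ} {K : NNReal} {D : ℝ}
    (hxy : HasGeneratorLimit S x y) (hΦ : LipschitzWith K Φ)
    (hD : Tendsto (fun h : ℝ => h⁻¹ * (Φ (x + h • y) - Φ x)) (𝓝[>] 0) (𝓝 D)) :
    Tendsto (fun h : ℝ => h⁻¹ * (Φ (S h x) - Φ x)) (𝓝[>] 0) (𝓝 D) := by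
  have herr : Tendsto (fun h : ℝ => h⁻¹ * (Φ (S h x) - Φ (x + h • y))) (𝓝[>] 0) (𝓝 0) := by
    have hlim : Tendsto (fun h : ℝ => K * ‖h⁻¹ • (S h x - x) - y‖) (𝓝[>] 0) (𝓝 0) := by
      simpa using (tendsto_iff_norm_sub_tendsto_zero.1 hxy).const_mul (K : ℝ)
    refine squeeze_zero_norm' ?_ hlim
    filter_upwards [self_mem_nhdsWithin] with h (hh : 0 < h)
    have hsplit : h⁻¹ • (S h x - x) - y = h⁻¹ • (S h x - (x + h • y)) := by
      rw [smul_sub, smul_sub, smul_add, inv_smul_smul₀ hh.ne']; abel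
    rw [hsplit, norm_smul, norm_mul, Real.norm_eq_abs, Real.norm_eq_abs, abs_inv, abs_of_pos hh,
      mul_left_comm]
    have hlip := hΦ.dist_le_mul (S h x) (x + h • y)
    rw [Real.dist_eq, dist_eq_norm] at hlip
    exact mul_le_mul_of_nonneg_left hlip (by positivity)
  have hsum := hD.add herr
  rw [add_zero] at hsum
  exact hsum.congr fun h => by ring

namespace IsC0Semigroup

lemma apply_apply (hS : IsC0Semigroup S) {s t : ℝ} (hs : 0 ≤ s) (ht : 0 ≤ t) (x : E) :
    S s (S t x) = S (s + t) x := by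
  rw [hS.map_add t s ht hs]; rfl

lemma hasGeneratorLimit_apply (hS : IsC0Semigroup S) (h : HasGeneratorLimit S x y) {t : ℝ}
    (ht : 0 ≤ t) : HasGeneratorLimit S (S t x) (S t y) := by
  refine (((S t).continuous.tendsto y).comp h).congr' ?_
  filter_upwards [self_mem_nhdsWithin] with h (hh : 0 < h)
  simp only [Function.comp_apply, map_smul, map_sub]
  rw [hS.apply_apply hh.le ht, hS.apply_apply ht hh.le, add_comm]

lemma tendsto_slope_primitive [CompleteSpace E] (hS : IsC0Semigroup S) (x : E) {t : ℝ}
    (ht : 0 ≤ t) :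
    Tendsto (fun h : ℝ => h⁻¹ • ((∫ s in (0 : ℝ)..t + h, S s x) - ∫ s in (0 : ℝ)..t, S s x))
      (𝓝[>] 0) (𝓝 (S t x)) := by
  have hcont := hS.continuousOn_orbit x
  exact hasDerivWithinAt_Ici_iff_tendsto_slope_zero_right.1
    (intervalIntegral.integral_hasDerivWithinAt_right
      ((hcont.mono Icc_subset_Ici_self).intervalIntegrable_of_Icc ht)
      ((hcont.stronglyMeasurableAtFilter_nhdsWithin measurableSet_Ici t).filter_mono
        (nhdsWithin_mono _ fun s hs => ht.trans (le_of_lt hs)))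
      ((hcont t ht).mono fun s hs => ht.trans (le_of_lt hs)))

lemma apply_primitive [CompleteSpace E] (hS : IsC0Semigroup S) (x : E) {t h : ℝ} (ht : 0 ≤ t)
    (hh : 0 ≤ h) :
    S h (∫ s in (0 : ℝ)..t, S s x) =
      (∫ s in (0 : ℝ)..t + h, S s x) - ∫ s in (0 : ℝ)..h, S s x := by
  have hint : ∀ a b, 0 ≤ a → 0 ≤ b → IntervalIntegrable (fun s => S s x) volume a b :=
    fun a b ha hb => ((hS.continuousOn_orbit x).mono fun s hs =>
      mem_Ici.2 ((le_min ha hb).trans hs.1)).intervalIntegrable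
  rw [← (S h).intervalIntegral_comp_comm (hint 0 t le_rfl ht), intervalIntegral.integral_congr
    (g := fun s => S (h + s) x) fun s hs => by
      rw [uIcc_of_le ht] at hs; exact hS.apply_apply hh hs.1 x,
    intervalIntegral.integral_comp_add_left (fun s => S s x), add_zero, add_comm h t,
    intervalIntegral.integral_interval_sub_left (hint 0 _ le_rfl (by positivity))
      (hint 0 h le_rfl hh)]

/-- The averages `t⁻¹ ∫₀ᵗ S(s)x ds` lie in the domain and tend to `x`. -/
lemma dense_setOf_hasGeneratorLimit [CompleteSpace E] (hS : IsC0Semigroup S) :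
    Dense {x : E | ∃ y, HasGeneratorLimit S x y} := by
  intro x
  set P : ℝ → E := fun t => ∫ s in (0 : ℝ)..t, S s x
  have hP0 : Tendsto (fun h : ℝ => h⁻¹ • P h) (𝓝[>] 0) (𝓝 x) := by
    simpa [P, hS.map_zero] using hS.tendsto_slope_primitive x le_rfl
  have hgen : ∀ t > 0, HasGeneratorLimit S (P t) (S t x - x) := by
    intro t ht
    refine ((hS.tendsto_slope_primitive x ht.le).sub hP0).congr' ?_
    filter_upwards [self_mem_nhdsWithin] with h (hh : 0 < h)
    simp only [P, hS.apply_primitive x ht.le hh.le, smul_sub]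
    abel
  refine mem_closure_of_tendsto hP0 ?_
  filter_upwards [self_mem_nhdsWithin] with t (ht : 0 < t)
  exact ⟨_, (hgen t ht).const_smul t⁻¹⟩

end IsC0Semigroup

end C0Semigroup

section NegPartDecay

variable {α ι : Type*} [MeasurableSpace α] {μ : Measure α} [IsFiniteMeasure μ] [Fintype ι]
  {S : ℝ → Lp (PiLp 1 fun _ : ι => ℝ) 1 μ →L[ℝ] Lp (PiLp 1 fun _ : ι => ℝ) 1 μ} {C : ℝ}

lemma integralSumComp_negPart_le_smoothNegPart_add {ε : ℝ} (hε : 0 < ε)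
    (ζ : Lp (PiLp 1 fun _ : ι => ℝ) 1 μ) :
    integralSumComp (·⁻) ζ ≤
      integralSumComp (smoothNegPart ε) ζ + Fintype.card ι * μ.real univ * ε :=
  integralSumComp_le_add lipschitzWith_negPart (by simp) (lipschitzWith_smoothNegPart ε)
    (smoothNegPart_zero ε) (negPart_le_smoothNegPart_add hε) ζ

lemma integralSumComp_smoothNegPart_le {ε : ℝ} (hε : 0 ≤ ε)
    (ζ : Lp (PiLp 1 fun _ : ι => ℝ) 1 μ) :
    integralSumComp (smoothNegPart ε) ζ ≤ integralSumComp (·⁻) ζ := by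
  simpa using integralSumComp_le_add (c := 0) (lipschitzWith_smoothNegPart ε)
    (smoothNegPart_zero ε) lipschitzWith_negPart (by simp)
    (fun x => by simpa using smoothNegPart_le_negPart hε x) ζ

namespace IsC0Semigroup

lemma integralSumComp_smoothNegPart_apply_le (hS : IsC0Semigroup S) (hC : 0 ≤ C)
    (hdiss : ∀ ε > 0, ∀ u y, HasGeneratorLimit S u y →
      ∫ a, ∑ i, smoothNegPartDeriv ε (u a i) * y a i ∂μ ≤ C * integralSumComp (·⁻) u)
    {ψ y : Lp (PiLp 1 fun _ : ι => ℝ) 1 μ} (hψ : HasGeneratorLimit S ψ y) {ε t : ℝ}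
    (hε : 0 < ε) (ht : 0 ≤ t) :
    integralSumComp (smoothNegPart ε) (S t ψ) ≤ gronwallBound (integralSumComp (·⁻) ψ) C
      (C * (Fintype.card ι * μ.real univ * ε)) t := by
  have hΦ := lipschitzWith_integralSumComp (μ := μ) (ι := ι) (lipschitzWith_smoothNegPart ε)
    (smoothNegPart_zero ε)
  set f : ℝ → ℝ := fun s => integralSumComp (smoothNegPart ε) (S s ψ)
  set f' : ℝ → ℝ := fun s => ∫ a, ∑ i, smoothNegPartDeriv ε (S s ψ a i) * S s y a i ∂μ
  have hderiv : ∀ s ≥ (0 : ℝ), HasDerivWithinAt f (f' s) (Ici s) s := by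
    intro s hs
    refine hasDerivWithinAt_Ici_iff_tendsto_slope_zero_right.2
      (((hS.hasGeneratorLimit_apply hψ hs).tendsto_slope_comp hΦ
        (tendsto_slope_integralSumComp (lipschitzWith_smoothNegPart ε) (smoothNegPart_zero ε)
          (hasDerivAt_smoothNegPart ε) _ _)).congr' ?_)
    filter_upwards [self_mem_nhdsWithin] with h (hh : 0 < h)
    simp only [f, smul_eq_mul, hS.apply_apply hh.le hs, add_comm h s]
  have hgron := le_gronwallBound_of_liminf_deriv_right_le (f := f) (f' := f') (K := C)
    (ε := C * (Fintype.card ι * μ.real univ * ε)) (a := 0) (b := t)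
    (hΦ.continuous.comp_continuousOn ((hS.continuousOn_orbit ψ).mono Icc_subset_Ici_self))
    (fun s hs r hr => (hderiv s hs.1).liminf_right_slope_le hr)
    (by simpa [f, hS.map_zero] using integralSumComp_smoothNegPart_le hε.le ψ)
    (fun s hs => ?_) t ⟨ht, le_rfl⟩
  · simpa using hgron
  calc f' s ≤ C * integralSumComp (·⁻) (S s ψ) :=
        hdiss ε hε _ _ (hS.hasGeneratorLimit_apply hψ hs.1)
    _ ≤ C * (f s + Fintype.card ι * μ.real univ * ε) :=
        mul_le_mul_of_nonneg_left (integralSumComp_negPart_le_smoothNegPart_add hε _) hC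
    _ = C * f s + C * (Fintype.card ι * μ.real univ * ε) := mul_add _ _ _

lemma integralSumComp_negPart_apply_le_of_hasGeneratorLimit (hS : IsC0Semigroup S)
    (hC : 0 ≤ C) (hdiss : ∀ ε > 0, ∀ u y, HasGeneratorLimit S u y →
      ∫ a, ∑ i, smoothNegPartDeriv ε (u a i) * y a i ∂μ ≤ C * integralSumComp (·⁻) u)
    {ψ y : Lp (PiLp 1 fun _ : ι => ℝ) 1 μ} (hψ : HasGeneratorLimit S ψ y) {t : ℝ} (ht : 0 ≤ t) :
    integralSumComp (·⁻) (S t ψ) ≤ integralSumComp (·⁻) ψ * Real.exp (C * t) := by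
  set k : ℝ := Fintype.card ι * μ.real univ
  have hbound : Continuous fun ε =>
      gronwallBound (integralSumComp (·⁻) ψ) C (C * (k * ε)) t + k * ε :=
    ((gronwallBound_continuous_ε _ _ _).comp (by fun_prop)).add (by fun_prop)
  refine ge_of_tendsto (by simpa [gronwallBound_ε0] using
    (hbound.tendsto 0).mono_left (nhdsWithin_le_nhds (s := Ioi 0))) ?_
  filter_upwards [self_mem_nhdsWithin] with ε (hε : 0 < ε)
  exact (integralSumComp_negPart_le_smoothNegPart_add hε (S t ψ)).trans
    (add_le_add (hS.integralSumComp_smoothNegPart_apply_le hC hdiss hψ hε ht) le_rfl)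

theorem integralSumComp_negPart_apply_le (hS : IsC0Semigroup S) (hC : 0 ≤ C)
    (hdiss : ∀ ε > 0, ∀ u y, HasGeneratorLimit S u y →
      ∫ a, ∑ i, smoothNegPartDeriv ε (u a i) * y a i ∂μ ≤ C * integralSumComp (·⁻) u)
    (ψ : Lp (PiLp 1 fun _ : ι => ℝ) 1 μ) {t : ℝ} (ht : 0 ≤ t) :
    integralSumComp (·⁻) (S t ψ) ≤ integralSumComp (·⁻) ψ * Real.exp (C * t) := by
  have hΦ := (lipschitzWith_integralSumComp (μ := μ) (ι := ι) lipschitzWith_negPart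
    (by simp)).continuous
  exact hS.dense_setOf_hasGeneratorLimit.induction (P := fun ψ =>
    integralSumComp (·⁻) (S t ψ) ≤ integralSumComp (·⁻) ψ * Real.exp (C * t))
    (fun ψ ⟨y, hψ⟩ =>
      hS.integralSumComp_negPart_apply_le_of_hasGeneratorLimit hC hdiss hψ ht)
    (isClosed_le (hΦ.comp (S t).continuous) (hΦ.mul continuous_const)) ψ

end IsC0Semigroup

end NegPartDecay

section Model

variable {ω p q : ℝ} {β γ δ μf : ℝ → ℝ} {u : XX ω} {g g' : ℝ → Fin 3 → ℝ}

lemma InDomA.integral_smoothNegPartDeriv_mul (hω : 0 ≤ ω) (hdom : InDomA ω p q β μf u g g')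
    (ε : ℝ) (i : Fin 3) :
    ∫ a, smoothNegPartDeriv ε (g a i) * g' a i ∂muM ω =
      smoothNegPart ε (g ω i) - smoothNegPart ε (g 0 i) := by
  obtain ⟨-, hg', hprim, -, -⟩ := hdom
  have hint : IntervalIntegrable (fun a => g' a i) volume 0 ω :=
    (intervalIntegrable_iff_integrableOn_Icc_of_le hω).2 (hg'.eval i)
  rw [hprim i ω ⟨hω, le_rfl⟩, ← integral_deriv_comp_primitive (lipschitzWith_smoothNegPart ε)
    (hasDerivAt_smoothNegPart ε) hint, intervalIntegral.integral_of_le hω, muM,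
    integral_Icc_eq_integral_Ioc]
  exact setIntegral_congr_fun measurableSet_Ioc fun a ha => by
    rw [hprim i a (Ioc_subset_Icc_self ha)]

lemma InDomA.integrable_smoothNegPartDeriv_mul (hdom : InDomA ω p q β μf u g g') (ε : ℝ)
    (i : Fin 3) : Integrable (fun a => smoothNegPartDeriv ε (g a i) * g' a i) (muM ω) :=
  (hdom.2.1.eval i).bdd_mul ((continuous_smoothNegPartDeriv ε).comp_aestronglyMeasurable
    ((Lp.aestronglyMeasurable_apply u i).congr (hdom.1.mono fun _ ha => ha i)))
    (Eventually.of_forall fun _ => norm_smoothNegPartDeriv_le ε _)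

lemma sum_negPart_Bvec_le {Mβ : ℝ} (hβ : ∀ᵐ a ∂muM ω, β a ∈ Icc 0 Mβ) (hp : p ∈ Icc (0 : ℝ) 1)
    (hq : q ∈ Icc (0 : ℝ) 1) (hg : Integrable (fun a => ∑ i, (g a i)⁻) (muM ω)) :
    ∑ i, (Bvec ω p q β g i)⁻ ≤ 3 * Mβ * ∫ a, ∑ i, (g a i)⁻ ∂muM ω := by
  have row : ∀ w : ℝ → ℝ, (∀ᵐ a ∂muM ω, (w a)⁻ ≤ Mβ * ∑ i, (g a i)⁻) →
      (∫ a in Icc 0 ω, w a)⁻ ≤ Mβ * ∫ a, ∑ i, (g a i)⁻ ∂muM ω := fun w hw =>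
    (negPart_integral_le w).trans ((integral_mono_of_nonneg
      (Eventually.of_forall fun _ => negPart_nonneg _) (hg.const_mul Mβ) hw).trans_eq
      (integral_const_mul _ _))
  have h0 := row (fun a => β a * (g a 0 + (1 - p) * g a 1 + (1 - q) * g a 2))
    (hβ.mono fun a hβa => by
      refine negPart_mul_le_mul hβa ?_
      simp only [Fin.sum_univ_three]
      linarith [negPart_add_le (g a 0 + (1 - p) * g a 1) ((1 - q) * g a 2),
        negPart_add_le (g a 0) ((1 - p) * g a 1),
        negPart_mul_le_of_mem_Icc (x := g a 1) ⟨sub_nonneg.2 hp.2, by linarith [hp.1]⟩,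
        negPart_mul_le_of_mem_Icc (x := g a 2) ⟨sub_nonneg.2 hq.2, by linarith [hq.1]⟩])
  have h1 := row (fun a => p * (β a * g a 1)) (hβ.mono fun a hβa => by
    rw [mul_left_comm]
    refine negPart_mul_le_mul hβa ?_
    simp only [Fin.sum_univ_three]
    linarith [negPart_mul_le_of_mem_Icc (x := g a 1) hp, negPart_nonneg (g a 0),
      negPart_nonneg (g a 2)])
  have h2 := row (fun a => q * (β a * g a 2)) (hβ.mono fun a hβa => by
    rw [mul_left_comm]
    refine negPart_mul_le_mul hβa ?_
    simp only [Fin.sum_univ_three]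
    linarith [negPart_mul_le_of_mem_Icc (x := g a 2) hq, negPart_nonneg (g a 0),
      negPart_nonneg (g a 1)])
  rw [Fin.sum_univ_three]
  simp only [Bvec, Matrix.cons_val_zero, Matrix.cons_val_one, Matrix.cons_val_two,
    Matrix.head_cons, Matrix.tail_cons]
  linarith

lemma sum_smoothNegPartDeriv_mul_Aval_le {ε Mγ Mδ a : ℝ} (hε : 0 ≤ ε) (hγ : γ a ∈ Icc 0 Mγ)
    (hδ : δ a ∈ Icc 0 Mδ) (hμ : 0 ≤ μf a) :
    ∑ i, smoothNegPartDeriv ε (g a i) * Aval γ δ μf g g' a i ≤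
      -∑ i, smoothNegPartDeriv ε (g a i) * g' a i + (Mγ + Mδ) * ∑ i, (g a i)⁻ := by
  simp only [Fin.sum_univ_three, Aval, Matrix.cons_val_zero, Matrix.cons_val_one,
    Matrix.cons_val_two, Matrix.head_cons, Matrix.tail_cons]
  set n : Fin 3 → ℝ := fun i => smoothNegPartDeriv ε (g a i)
  have hn : ∀ i, n i ∈ Icc (-1 : ℝ) 0 := fun i => smoothNegPartDeriv_mem_Icc ε _
  have hng : ∀ i, 0 ≤ μf a * (n i * g a i) := fun i =>
    mul_nonneg hμ (smoothNegPartDeriv_mul_self_nonneg hε _)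
  have hloss : 0 ≤ (δ a + γ a) * (n 1 * g a 1) :=
    mul_nonneg (add_nonneg hδ.1 hγ.1) (smoothNegPartDeriv_mul_self_nonneg hε _)
  have hgain0 : δ a * (n 0 * g a 1) ≤ Mδ * (g a 1)⁻ :=
    (mul_le_mul_of_nonneg_left (mul_le_negPart (hn 0) _) hδ.1).trans
      (mul_le_mul_of_nonneg_right hδ.2 (negPart_nonneg _))
  have hgain2 : γ a * (n 2 * g a 1) ≤ Mγ * (g a 1)⁻ :=
    (mul_le_mul_of_nonneg_left (mul_le_negPart (hn 2) _) hγ.1).trans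
      (mul_le_mul_of_nonneg_right hγ.2 (negPart_nonneg _))
  have hrest : 0 ≤ (Mγ + Mδ) * ((g a 0)⁻ + (g a 2)⁻) :=
    mul_nonneg (add_nonneg (hγ.1.trans hγ.2) (hδ.1.trans hδ.2))
      (add_nonneg (negPart_nonneg _) (negPart_nonneg _))
  linarith [hng 0, hng 1, hng 2]

theorem InDomA.integral_smoothNegPartDeriv_mul_le {y : XX ω} {Mβ Mγ Mδ ε : ℝ} (hω : 0 ≤ ω)
    (hβ : ∀ᵐ a ∂muM ω, β a ∈ Icc 0 Mβ) (hγ : ∀ᵐ a ∂muM ω, γ a ∈ Icc 0 Mγ)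
    (hδ : ∀ᵐ a ∂muM ω, δ a ∈ Icc 0 Mδ) (hμ : ∀ᵐ a ∂muM ω, 0 ≤ μf a)
    (hp : p ∈ Icc (0 : ℝ) 1) (hq : q ∈ Icc (0 : ℝ) 1) (hε : 0 ≤ ε)
    (hdom : InDomA ω p q β μf u g g') (hy : ∀ᵐ a ∂muM ω, ∀ i, y a i = Aval γ δ μf g g' a i) :
    ∫ a, ∑ i, smoothNegPartDeriv ε (u a i) * y a i ∂muM ω ≤
      (3 * Mβ + Mγ + Mδ) * integralSumComp (·⁻) u := by
  have hu : ∀ᵐ a ∂muM ω, ∀ i, u a i = g a i := hdom.1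
  have hN : integralSumComp (·⁻) u = ∫ a, ∑ i, (g a i)⁻ ∂muM ω :=
    integral_congr_ae (hu.mono fun a ha => by simp only [ha])
  have hNint : Integrable (fun a => ∑ i, (g a i)⁻) (muM ω) :=
    (integrable_sum_comp lipschitzWith_negPart (by simp) u).congr
      (hu.mono fun a ha => by simp only [ha])
  have hLint : Integrable (fun a => ∑ i, smoothNegPartDeriv ε (u a i) * y a i) (muM ω) :=
    integrable_finsetSum _ fun i _ => (Lp.integrable_apply y i).bdd_mul
      ((continuous_smoothNegPartDeriv ε).comp_aestronglyMeasurable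
        (Lp.aestronglyMeasurable_apply u i))
      (Eventually.of_forall fun _ => norm_smoothNegPartDeriv_le ε _)
  have hTint : Integrable (fun a => ∑ i, smoothNegPartDeriv ε (g a i) * g' a i) (muM ω) :=
    integrable_finsetSum _ fun i _ => hdom.integrable_smoothNegPartDeriv_mul ε i
  calc ∫ a, ∑ i, smoothNegPartDeriv ε (u a i) * y a i ∂muM ω
      ≤ ∫ a, (-∑ i, smoothNegPartDeriv ε (g a i) * g' a i + (Mγ + Mδ) * ∑ i, (g a i)⁻) ∂muM ω := by
        refine integral_mono_ae hLint
          (hTint.neg.add (hNint.const_mul _)) ?_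
        filter_upwards [hu, hy, hγ, hδ, hμ] with a hua hya hγa hδa hμa
        simp only [hua, hya]
        exact sum_smoothNegPartDeriv_mul_Aval_le hε hγa hδa hμa
    _ = ∑ i, (smoothNegPart ε (g 0 i) - smoothNegPart ε (g ω i)) +
          (Mγ + Mδ) * ∫ a, ∑ i, (g a i)⁻ ∂muM ω := by
        rw [integral_add (f := fun a => -∑ i, smoothNegPartDeriv ε (g a i) * g' a i)
            hTint.neg (hNint.const_mul _), integral_neg,
          integral_finsetSum _ fun i _ => hdom.integrable_smoothNegPartDeriv_mul ε i,
          integral_const_mul]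
        simp only [hdom.integral_smoothNegPartDeriv_mul hω, ← Finset.sum_neg_distrib, neg_sub]
    _ ≤ ∑ i, (g 0 i)⁻ + (Mγ + Mδ) * ∫ a, ∑ i, (g a i)⁻ ∂muM ω := by
        gcongr with i
        linarith [smoothNegPart_le_negPart hε (g 0 i), smoothNegPart_nonneg hε (g ω i)]
    _ ≤ 3 * Mβ * ∫ a, ∑ i, (g a i)⁻ ∂muM ω + (Mγ + Mδ) * ∫ a, ∑ i, (g a i)⁻ ∂muM ω := by
        rw [hdom.2.2.2.2]
        gcongr
        exact sum_negPart_Bvec_le hβ hp hq hNint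
    _ = (3 * Mβ + Mγ + Mδ) * integralSumComp (·⁻) u := by rw [hN]; ring

instance isFiniteMeasure_muM (ω : ℝ) : IsFiniteMeasure (muM ω) := by
  unfold muM; infer_instance

lemma IsEssSupOn.nonneg {M : ℝ} {f : ℝ → ℝ} (hω : 0 < ω) (hM : IsEssSupOn ω f M) : 0 ≤ M := by
  have : (ae (muM ω)).NeBot := ae_neBot.2 (by simp [muM, Measure.restrict_eq_zero, hω])
  obtain ⟨a, ha⟩ := hM.1.exists
  exact (abs_nonneg _).trans ha

lemma IsEssInfOn.ae_mem_Icc {m M : ℝ} {f : ℝ → ℝ} (hm : IsEssInfOn ω f m) (hm0 : 0 ≤ m)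
    (hM : IsEssSupOn ω f M) : ∀ᵐ a ∂muM ω, f a ∈ Icc 0 M := by
  filter_upwards [hm.1, hM.1] with a hma hMa
  exact ⟨hm0.trans hma, (le_abs_self _).trans hMa⟩

lemma IsGenSemigroup.isC0Semigroup {S : ℝ → XX ω →L[ℝ] XX ω}
    (hS : IsGenSemigroup ω p q β γ δ μf S) : IsC0Semigroup S :=
  ⟨hS.1, hS.2.1, hS.2.2.1⟩

end Model

theorem semigroup_positive_general (ω : ℝ) (hω : 0 < ω)
    (β γ δ μf : ℝ → ℝ) (β₀ γ₀ δ₀ μ₀ : ℝ)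
    (hMβ : ∃ Mβ, IsEssSupOn ω β Mβ)
    (hβ₀ : IsEssInfOn ω β β₀) (hβ₀pos : 0 < β₀)
    (hMγ : ∃ Mγ, IsEssSupOn ω γ Mγ)
    (hγ₀ : IsEssInfOn ω γ γ₀) (hγ₀pos : 0 < γ₀)
    (hMδ : ∃ Mδ, IsEssSupOn ω δ Mδ)
    (hδ₀ : IsEssInfOn ω δ δ₀) (hδ₀pos : 0 < δ₀)
    (hμ₀ : IsEssInfOn ω μf μ₀) (hμ₀pos : 0 < μ₀)
    (p q : ℝ) (hp : p ∈ Icc (0:ℝ) 1) (hq : q ∈ Icc (0:ℝ) 1)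
    (S : ℝ → XX ω →L[ℝ] XX ω) (hS : IsGenSemigroup ω p q β γ δ μf S) :
    ∀ t : ℝ, 0 ≤ t → ∀ ψ ∈ Xpos ω, S t ψ ∈ Xpos ω := by
  obtain ⟨Mβ, hMβ⟩ := hMβ
  obtain ⟨Mγ, hMγ⟩ := hMγ
  obtain ⟨Mδ, hMδ⟩ := hMδ
  have hC : 0 ≤ 3 * Mβ + Mγ + Mδ := by
    linarith [hMβ.nonneg hω, hMγ.nonneg hω, hMδ.nonneg hω]
  have hdiss : ∀ ε > 0, ∀ u y, HasGeneratorLimit S u y →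
      ∫ a, ∑ i, smoothNegPartDeriv ε (u a i) * y a i ∂muM ω ≤
        (3 * Mβ + Mγ + Mδ) * integralSumComp (·⁻) u := by
    intro ε hε u y hy
    obtain ⟨g, g', hdom⟩ := (hS.2.2.2.1 u).1 ⟨y, hy⟩
    exact hdom.integral_smoothNegPartDeriv_mul_le hω.le (hβ₀.ae_mem_Icc hβ₀pos.le hMβ)
      (hγ₀.ae_mem_Icc hγ₀pos.le hMγ) (hδ₀.ae_mem_Icc hδ₀pos.le hMδ)
      (hμ₀.1.mono fun a ha => hμ₀pos.le.trans ha) hp hq hε.le (hS.2.2.2.2 u y g g' hdom hy)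
  intro t ht ψ hψ
  have hdecay := hS.isC0Semigroup.integralSumComp_negPart_apply_le hC hdiss ψ ht
  rw [(integralSumComp_negPart_eq_zero_iff ψ).2 hψ, zero_mul] at hdecay
  exact (integralSumComp_negPart_eq_zero_iff _).1
    (hdecay.antisymm (integralSumComp_nonneg (fun x => negPart_nonneg x) _))

/-- under (H1), (H2) and `p,q ∈ [0,1]`, the `C₀`-semigroup `(S(t))_{t≥0}`
generated by `A` is positive: `S(t)X⁺ ⊆ X⁺` for every `t ≥ 0`. -/
theorem semigroup_positive (ω : ℝ) (hω : 0 < ω)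
    (β γ δ μf : ℝ → ℝ) (β₀ γ₀ δ₀ μ₀ : ℝ)
    (hβmeas : Measurable β) (hMβ : ∃ Mβ, IsEssSupOn ω β Mβ)
    (hβ₀ : IsEssInfOn ω β β₀) (hβ₀pos : 0 < β₀)
    (hγmeas : Measurable γ) (hMγ : ∃ Mγ, IsEssSupOn ω γ Mγ)
    (hγ₀ : IsEssInfOn ω γ γ₀) (hγ₀pos : 0 < γ₀)
    (hδmeas : Measurable δ) (hMδ : ∃ Mδ, IsEssSupOn ω δ Mδ)
    (hδ₀ : IsEssInfOn ω δ δ₀) (hδ₀pos : 0 < δ₀)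
    (hμmeas : Measurable μf)
    (hμloc : ∀ b : ℝ, 0 ≤ b → b < ω → IntegrableOn μf (Icc 0 b))
    (hμ₀ : IsEssInfOn ω μf μ₀) (hμ₀pos : 0 < μ₀)
    (hμinf : ∫⁻ a in Icc (0:ℝ) ω, ENNReal.ofReal (μf a) = ⊤)
    (p q : ℝ) (hp : p ∈ Icc (0:ℝ) 1) (hq : q ∈ Icc (0:ℝ) 1)
    (S : ℝ → XX ω →L[ℝ] XX ω) (hS : IsGenSemigroup ω p q β γ δ μf S) :
    ∀ t : ℝ, 0 ≤ t → ∀ ψ ∈ Xpos ω, S t ψ ∈ Xpos ω :=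
  semigroup_positive_general ω hω β γ δ μf β₀ γ₀ δ₀ μ₀ hMβ hβ₀ hβ₀pos hMγ hγ₀ hγ₀pos hMδ hδ₀ hδ₀pos
    hμ₀ hμ₀pos p q hp hq S hS

end
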